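/- arXiv:1103.6161 — 8 statements merged into one kernel-verified Lean document; each statement's English description precedes it below -/
import Mathlib

section
/- For every real numbers $A$ and $B$, $\int_{-\infty}^\infty\int_{-\infty}^\infty \exp(\sqrt{2}Ax+\sqrt{2}By-\frac{x^2+y^2}{2})\cos(xy)\,dx\,dy = \sqrt{2}\pi e^{(A^2+B^2)/2}\cos(AB)$. -/
/-!
The integrand is the real part of `exp (-x²/2 + (√2 A + i y) x + √2 B y - y²/2)`, so the inner
integral is a complex Gaussian integral; it leaves `√(2π) e^{A²} e^{-y² + √2 B y} cos (√2 A y)`,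
again the real part of a Gaussian in `y`, and a second Gaussian integral gives the result.
-/

open MeasureTheory Real

lemma integral_exp_quadratic_mul_cos {a : ℝ} (ha : 0 < a) (b c d : ℝ) :
    ∫ x : ℝ, exp (-a * x ^ 2 + b * x) * cos (c * x + d) =
      √(π / a) * exp ((b ^ 2 - c ^ 2) / (4 * a)) * cos (b * c / (2 * a) + d) := by
  have ha' : (0 : ℝ) < (a : ℂ).re := by simpa using ha
  have h_re (x : ℝ) : exp (-a * x ^ 2 + b * x) * cos (c * x + d) =
      (Complex.exp (-a * x ^ 2 + (b + c * Complex.I) * x + d * Complex.I)).re := by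
    rw [Complex.exp_re]
    congr 2 <;> simp [← Complex.ofReal_pow]
  have h_exponent : (d * Complex.I - (b + c * Complex.I) ^ 2 / (4 * -(a : ℂ))) =
      ((b ^ 2 - c ^ 2) / (4 * a) : ℝ) + ((b * c / (2 * a) + d : ℝ) : ℂ) * Complex.I := by
    have : (a : ℂ) ≠ 0 := Complex.ofReal_ne_zero.mpr ha.ne'
    push_cast
    field_simp
    linear_combination 2 * (c : ℂ) ^ 2 * Complex.I_sq
  have h_sqrt : ((π : ℂ) / -(-(a : ℂ))) ^ (1 / 2 : ℂ) = (√(π / a) : ℂ) := by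
    rw [neg_neg, ← Complex.ofReal_div, sqrt_eq_rpow, Complex.ofReal_cpow (by positivity)]
    norm_num
  simp_rw [h_re, ← RCLike.re_to_complex]
  rw [integral_re (integrable_cexp_quadratic ha' _ _), RCLike.re_to_complex,
    integral_cexp_quadratic (by simpa using ha), h_exponent, h_sqrt, Complex.re_ofReal_mul,
    Complex.exp_re, Complex.add_re, Complex.add_im]
  simp only [Complex.ofReal_re, Complex.ofReal_im, Complex.re_ofReal_mul, Complex.I_re,
    Complex.im_ofReal_mul, Complex.I_im]
  ring_nf

lemma integral_exp_sqrt_two_mul_cos_mul (A B y : ℝ) :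
    ∫ x : ℝ, exp (√2 * A * x + √2 * B * y - (x ^ 2 + y ^ 2) / 2) * cos (x * y) =
      √(2 * π) * exp (A ^ 2) * (exp (-1 * y ^ 2 + √2 * B * y) * cos (√2 * A * y + 0)) := by
  have h_two : √2 ^ 2 = 2 := sq_sqrt zero_le_two
  have h_split (x : ℝ) : exp (√2 * A * x + √2 * B * y - (x ^ 2 + y ^ 2) / 2) * cos (x * y) =
      exp (√2 * B * y - y ^ 2 / 2) * (exp (-(1 / 2) * x ^ 2 + √2 * A * x) * cos (y * x + 0)) := by
    rw [← mul_assoc, ← exp_add]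
    ring_nf
  simp_rw [h_split]
  rw [integral_const_mul, integral_exp_quadratic_mul_cos (by norm_num), mul_pow, h_two,
    show π / (1 / 2) = 2 * π by ring]
  have h_exp : exp (√2 * B * y - y ^ 2 / 2) * exp ((2 * A ^ 2 - y ^ 2) / (4 * (1 / 2))) =
      exp (A ^ 2) * exp (-1 * y ^ 2 + √2 * B * y) := by
    rw [← exp_add, ← exp_add]
    ring_nf
  rw [show √2 * A * y / (2 * (1 / 2)) + 0 = √2 * A * y + 0 by ring]
  linear_combination √(2 * π) * cos (√2 * A * y + 0) * h_exp

theorem stmt_0 (A B : ℝ) :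
    ∫ y : ℝ, ∫ x : ℝ,
      Real.exp (Real.sqrt 2 * A * x + Real.sqrt 2 * B * y - (x ^ 2 + y ^ 2) / 2)
        * Real.cos (x * y)
    = Real.sqrt 2 * Real.pi * Real.exp ((A ^ 2 + B ^ 2) / 2) * Real.cos (A * B) := by
  have h_two : √2 ^ 2 = 2 := sq_sqrt zero_le_two
  simp_rw [integral_exp_sqrt_two_mul_cos_mul]
  rw [integral_const_mul, integral_exp_quadratic_mul_cos one_pos, mul_pow, mul_pow, h_two,
    sqrt_mul zero_le_two, div_one]
  have h_exp :
      exp (A ^ 2) * exp ((2 * B ^ 2 - 2 * A ^ 2) / (4 * 1)) = exp ((A ^ 2 + B ^ 2) / 2) := by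
    rw [← exp_add]
    ring_nf
  have h_cos : √2 * B * (√2 * A) / (2 * 1) + 0 = A * B := by
    linear_combination A * B / 2 * h_two
  rw [h_cos]
  have h_pi : √π * √π = π := mul_self_sqrt pi_pos.le
  linear_combination √2 * cos (A * B) * (exp (A ^ 2) * exp ((2 * B ^ 2 - 2 * A ^ 2) / (4 * 1)) * h_pi
    + π * h_exp)
end

section
/- Let $h_5(x) = \frac{4x^5-20x^3+15x}{2\pi^{1/4}\sqrt{15}}$. Then $\int_{-\infty}^\infty\int_{-\infty}^\infty \exp(-\frac{x^2+y^2}{2}) h_5(x)^2 h_5(y)^2 \cos(xy)\,dx\,dy = 49\sqrt{2}$. -/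
/-!
Write `h5 x ^ 2 = P(x)² / (60 √π)` with `P = 4X⁵ - 20X³ + 15X`. For a polynomial `p`, the integral
`∫ p(x) e^{-bx²} cos(xy) dx` collapses to the Gaussian Fourier transform `√(π/b) e^{-y²/4b}` once
`p` is shifted by a polynomial `q` such that `q(x) e^{-bx²} cos(xy)` is an exact derivative
`(e^{-bx²} (a(x) cos(xy) + c(x) sin(xy)))'`, whose integral vanishes. Explicit polynomials `a, c`
give `∫ P(x)² e^{-x²/2} cos(xy) dx = √(2π) e^{-y²/2} R(y)` for an explicit polynomial `R`, and an
exact derivative of the same kind gives `∫ P(y)² R(y) e^{-y²} dy = 176400 √π`. The double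
integral is therefore `√(2π) / (3600 π) · 176400 √π = 49 √2`.
-/

open MeasureTheory Real

noncomputable def h5 (x : ℝ) : ℝ :=
  (4 * x ^ 5 - 20 * x ^ 3 + 15 * x) / (2 * Real.pi ^ ((1 : ℝ) / 4) * Real.sqrt 15)

open Filter Topology Polynomial

theorem integral_eq_zero_of_hasDerivAt_of_tendsto_cocompact {F f : ℝ → ℝ}
    (hF : ∀ x, HasDerivAt F (f x) x) (hf : Integrable f)
    (hFlim : Tendsto F (cocompact ℝ) (𝓝 0)) :
    ∫ x, f x = 0 := by
  simpa using integral_of_hasDerivAt_of_tendsto hF hf (hFlim.mono_left atBot_le_cocompact)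
    (hFlim.mono_left atTop_le_cocompact)

section PolynomialMulGaussian

variable {b : ℝ}

theorem tendsto_eval_mul_exp_neg_mul_sq_cocompact (hb : 0 < b) (p : ℝ[X]) :
    Tendsto (fun x => p.eval x * exp (-b * x ^ 2)) (cocompact ℝ) (𝓝 0) := by
  induction p using Polynomial.induction_on' with
  | add p q hp hq => simpa [add_mul] using hp.add hq
  | monomial n c =>
    have h := (tendsto_rpow_abs_mul_exp_neg_mul_sq_cocompact hb n).const_mul |c|
    rw [mul_zero] at h
    refine tendsto_zero_iff_norm_tendsto_zero.2 (h.congr fun x => ?_)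
    simp [mul_assoc]

theorem integrable_eval_mul_exp_neg_mul_sq (hb : 0 < b) (p : ℝ[X]) :
    Integrable fun x => p.eval x * exp (-b * x ^ 2) := by
  induction p using Polynomial.induction_on' with
  | add p q hp hq =>
    simp only [eval_add, add_mul]
    exact hp.add hq
  | monomial n c =>
    have h := (integrable_rpow_mul_exp_neg_mul_sq hb (s := n)
      (neg_one_lt_zero.trans_le n.cast_nonneg)).const_mul c
    simpa [mul_assoc] using h

theorem integrable_eval_mul_exp_neg_mul_sq_mul_cos (hb : 0 < b) (p : ℝ[X]) (y : ℝ) :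
    Integrable fun x => p.eval x * exp (-b * x ^ 2) * cos (x * y) :=
  (integrable_eval_mul_exp_neg_mul_sq hb p).mul_bdd (by fun_prop)
    (ae_of_all _ fun x => abs_cos_le_one _)

theorem integral_derivative_sub_mul_eval_mul_exp_neg_mul_sq_eq_zero (hb : 0 < b) (g : ℝ[X]) :
    ∫ x, (derivative g - C (2 * b) * X * g).eval x * exp (-b * x ^ 2) = 0 := by
  refine integral_eq_zero_of_hasDerivAt_of_tendsto_cocompact (fun x => ?_)
    (integrable_eval_mul_exp_neg_mul_sq hb _) (tendsto_eval_mul_exp_neg_mul_sq_cocompact hb g)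
  refine ((g.hasDerivAt x).fun_mul ((hasDerivAt_pow 2 x).const_mul (-b)).exp).congr_deriv ?_
  simp only [eval_sub, eval_mul, eval_C, eval_X]
  ring

/-- The integrand is the derivative of `e^{-bx²} (a(x) cos(xy) + c(x) sin(xy))`; the hypothesis on
`c` makes its `sin` part vanish. -/
theorem integral_eval_mul_exp_neg_mul_sq_mul_cos_eq_zero (hb : 0 < b) (y : ℝ) {a c : ℝ[X]}
    (hc : derivative c - C (2 * b) * X * c = C y * a) :
    ∫ x, (derivative a - C (2 * b) * X * a + C y * c).eval x * exp (-b * x ^ 2) * cos (x * y)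
      = 0 := by
  have hbdd {t : ℝ → ℝ} (ht : ∀ x, |t x| ≤ 1) :
      IsBoundedUnder (· ≤ ·) (cocompact ℝ) ((‖·‖) ∘ t) :=
    isBoundedUnder_of ⟨1, fun x => ht x⟩
  have hlim := ((tendsto_eval_mul_exp_neg_mul_sq_cocompact hb a).zero_mul_isBoundedUnder_le
    (hbdd fun x => abs_cos_le_one (x * y))).add
    ((tendsto_eval_mul_exp_neg_mul_sq_cocompact hb c).zero_mul_isBoundedUnder_le
      (hbdd fun x => abs_sin_le_one (x * y)))
  rw [add_zero] at hlim
  refine integral_eq_zero_of_hasDerivAt_of_tendsto_cocompact (fun x => ?_)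
    (integrable_eval_mul_exp_neg_mul_sq_mul_cos hb _ y) hlim
  have hexp := ((hasDerivAt_pow 2 x).const_mul (-b)).exp
  have hcos := (hasDerivAt_mul_const y (x := x)).cos
  have hsin := (hasDerivAt_mul_const y (x := x)).sin
  refine ((((a.hasDerivAt x).fun_mul hexp).fun_mul hcos).add
    (((c.hasDerivAt x).fun_mul hexp).fun_mul hsin)).congr_deriv ?_
  have hcx := congrArg (eval x) hc
  simp only [eval_sub, eval_mul, eval_C, eval_X] at hcx
  simp only [eval_add, eval_sub, eval_mul, eval_C, eval_X]
  linear_combination exp (-b * x ^ 2) * sin (x * y) * hcx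

theorem integral_exp_neg_mul_sq_mul_cos (hb : 0 < b) (y : ℝ) :
    ∫ x, exp (-b * x ^ 2) * cos (x * y) = sqrt (π / b) * exp (-y ^ 2 / (4 * b)) := by
  have hb' : 0 < (b : ℂ).re := by simpa using hb
  have hint :
      Integrable fun x : ℝ => Complex.exp (Complex.I * y * x) * Complex.exp (-b * x ^ 2) := by
    refine (integrable_cexp_quadratic hb' (Complex.I * y) 0).congr (ae_of_all _ fun x => ?_)
    simp only [← Complex.exp_add]
    ring_nf
  have hre (x : ℝ) : (Complex.exp (Complex.I * y * x) * Complex.exp (-b * x ^ 2)).re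
      = exp (-b * x ^ 2) * cos (x * y) := by
    rw [← Complex.exp_add, Complex.exp_re]
    simp [← Complex.ofReal_pow, mul_comm x y]
  have hrhs : ((π / b : ℂ) ^ (1 / 2 : ℂ) * Complex.exp (-y ^ 2 / (4 * b))).re
      = sqrt (π / b) * exp (-y ^ 2 / (4 * b)) := by
    rw [show (π / b : ℂ) ^ (1 / 2 : ℂ) = ((π / b) ^ (1 / 2 : ℝ) : ℝ) by
        rw [Complex.ofReal_cpow (by positivity)]; push_cast; rfl,
      show Complex.exp (-y ^ 2 / (4 * b)) = (exp (-y ^ 2 / (4 * b)) : ℝ) by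
        rw [Complex.ofReal_exp]; push_cast; rfl,
      ← Complex.ofReal_mul, Complex.ofReal_re, sqrt_eq_rpow]
  have h := integral_re hint
  simp only [RCLike.re_to_complex, hre] at h
  rw [h, fourierIntegral_gaussian hb', hrhs]

end PolynomialMulGaussian

noncomputable def h5Numerator : ℝ[X] := 4 * X ^ 5 - 20 * X ^ 3 + 15 * X

noncomputable def h5SqCosTransform : ℝ[X] :=
  4545 - 28425 * X ^ 2 + 24000 * X ^ 4 - 6120 * X ^ 6 + 560 * X ^ 8 - 16 * X ^ 10

/- The two polynomials below, and `outerAntideriv`, are found by undetermined coefficients from the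
first-order linear systems stated in `innerAntiderivSin_spec`, `innerAntiderivCos_spec` and
`outerAntideriv_spec`. -/
noncomputable def innerAntiderivCos (y : ℝ) : ℝ[X] :=
  C (-4545 + 12360 * y ^ 2 - 4680 * y ^ 4 + 512 * y ^ 6 - 16 * y ^ 8) * X
    + C (-1440 + 2200 * y ^ 2 - 400 * y ^ 4 + 16 * y ^ 6) * X ^ 3
    + C (-408 + 224 * y ^ 2 - 16 * y ^ 4) * X ^ 5 + C (16 + 16 * y ^ 2) * X ^ 7 - 16 * X ^ 9

noncomputable def innerAntiderivSin (y : ℝ) : ℝ[X] :=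
  C (16065 * y - 19320 * y ^ 3 + 5608 * y ^ 5 - 544 * y ^ 7 + 16 * y ^ 9)
    + C (5760 * y - 3480 * y ^ 3 + 464 * y ^ 5 - 16 * y ^ 7) * X ^ 2
    + C (1080 * y - 320 * y ^ 3 + 16 * y ^ 5) * X ^ 4 + C (112 * y - 16 * y ^ 3) * X ^ 6
    + C (16 * y) * X ^ 8

noncomputable def outerAntideriv : ℝ[X] :=
  -176400 * X + 223275 * X ^ 3 - 1735215 * X ^ 5 + 3049710 * X ^ 7 - 2798420 * X ^ 9
    + 1391080 * X ^ 11 - 387280 * X ^ 13 + 59296 * X ^ 15 - 4544 * X ^ 17 + 128 * X ^ 19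

theorem innerAntiderivSin_spec (y : ℝ) :
    derivative (innerAntiderivSin y) - C (2 * (1 / 2)) * X * innerAntiderivSin y
      = C y * innerAntiderivCos y :=
  Polynomial.funext fun x => by
    simp only [innerAntiderivSin, innerAntiderivCos, derivative_add, derivative_mul, derivative_C,
      derivative_X_pow, eval_add, eval_sub, eval_mul, eval_C, eval_ofNat, eval_zero, eval_pow,
      eval_X]
    ring

theorem innerAntiderivCos_spec (y : ℝ) :
    derivative (innerAntiderivCos y) - C (2 * (1 / 2)) * X * innerAntiderivCos y
      + C y * innerAntiderivSin y = h5Numerator ^ 2 - C (h5SqCosTransform.eval y) :=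
  Polynomial.funext fun x => by
    simp only [innerAntiderivSin, innerAntiderivCos, h5Numerator, h5SqCosTransform,
      derivative_add, derivative_sub, derivative_mul, derivative_C, derivative_ofNat,
      derivative_X_pow, derivative_X, eval_add, eval_sub, eval_mul, eval_C, eval_ofNat, eval_zero,
      eval_one, eval_pow, eval_X]
    ring

theorem outerAntideriv_spec :
    derivative outerAntideriv - C (2 * 1) * X * outerAntideriv
      = h5Numerator ^ 2 * h5SqCosTransform - C 176400 :=
  Polynomial.funext fun x => by
    simp only [outerAntideriv, h5Numerator, h5SqCosTransform, derivative_add, derivative_sub,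
      derivative_neg, derivative_mul, derivative_ofNat, derivative_X_pow, derivative_X, eval_add,
      eval_sub, eval_neg, eval_mul, eval_C, eval_ofNat, eval_zero, eval_one, eval_pow, eval_X]
    ring

theorem integral_h5Numerator_sq_mul_exp_mul_cos (y : ℝ) :
    ∫ x, (h5Numerator ^ 2).eval x * exp (-(1 / 2) * x ^ 2) * cos (x * y)
      = sqrt (2 * π) * exp (-(1 / 2) * y ^ 2) * h5SqCosTransform.eval y := by
  have hb : (0 : ℝ) < 1 / 2 := by norm_num
  set r := h5SqCosTransform.eval y
  have hzero := integral_eval_mul_exp_neg_mul_sq_mul_cos_eq_zero hb y (innerAntiderivSin_spec y)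
  rw [innerAntiderivCos_spec] at hzero
  have hsplit (x : ℝ) : (h5Numerator ^ 2).eval x * exp (-(1 / 2) * x ^ 2) * cos (x * y)
      = (h5Numerator ^ 2 - C r).eval x * exp (-(1 / 2) * x ^ 2) * cos (x * y)
        + r * (exp (-(1 / 2) * x ^ 2) * cos (x * y)) := by
    simp only [eval_sub, eval_C]
    ring
  simp_rw [hsplit]
  rw [integral_add (integrable_eval_mul_exp_neg_mul_sq_mul_cos hb _ y)
      (by simpa [mul_assoc] using integrable_eval_mul_exp_neg_mul_sq_mul_cos hb (C r) y),
    hzero, integral_const_mul, integral_exp_neg_mul_sq_mul_cos hb, zero_add,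
    show π / (1 / 2) = 2 * π by ring, show -y ^ 2 / (4 * (1 / 2)) = -(1 / 2) * y ^ 2 by ring]
  ring

theorem integral_h5Numerator_sq_mul_h5SqCosTransform_mul_exp :
    ∫ y, (h5Numerator ^ 2 * h5SqCosTransform).eval y * exp (-1 * y ^ 2) = 176400 * sqrt π := by
  have hzero := integral_derivative_sub_mul_eval_mul_exp_neg_mul_sq_eq_zero one_pos outerAntideriv
  rw [outerAntideriv_spec] at hzero
  have hsplit (y : ℝ) : (h5Numerator ^ 2 * h5SqCosTransform).eval y * exp (-1 * y ^ 2)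
      = (h5Numerator ^ 2 * h5SqCosTransform - C 176400).eval y * exp (-1 * y ^ 2)
        + 176400 * exp (-1 * y ^ 2) := by
    simp only [eval_sub, eval_C]
    ring
  simp_rw [hsplit]
  rw [integral_add (integrable_eval_mul_exp_neg_mul_sq one_pos _)
      ((integrable_exp_neg_mul_sq one_pos).const_mul _),
    hzero, integral_const_mul, integral_gaussian, div_one, zero_add]

theorem h5_sq (x : ℝ) : h5 x ^ 2 = (h5Numerator ^ 2).eval x / (60 * sqrt π) := by
  have hpi : (π ^ ((1 : ℝ) / 4)) ^ 2 = sqrt π := by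
    rw [← rpow_natCast, ← rpow_mul pi_pos.le, sqrt_eq_rpow]
    norm_num
  simp only [h5, h5Numerator, div_pow, mul_pow, hpi, sq_sqrt (show (0 : ℝ) ≤ 15 by norm_num),
    eval_pow, eval_add, eval_sub, eval_mul, eval_ofNat, eval_X]
  ring

theorem integral_exp_mul_h5_sq_mul_h5_sq_mul_cos (y : ℝ) :
    ∫ x, exp (-(x ^ 2 + y ^ 2) / 2) * h5 x ^ 2 * h5 y ^ 2 * cos (x * y)
      = sqrt (2 * π) / (3600 * π)
        * ((h5Numerator ^ 2 * h5SqCosTransform).eval y * exp (-1 * y ^ 2)) := by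
  have hsplit (x : ℝ) : exp (-(x ^ 2 + y ^ 2) / 2) * h5 x ^ 2 * h5 y ^ 2 * cos (x * y)
      = h5 y ^ 2 * exp (-(1 / 2) * y ^ 2) / (60 * sqrt π)
        * ((h5Numerator ^ 2).eval x * exp (-(1 / 2) * x ^ 2) * cos (x * y)) := by
    rw [h5_sq x, show -(x ^ 2 + y ^ 2) / 2 = -(1 / 2) * x ^ 2 + -(1 / 2) * y ^ 2 by ring,
      exp_add]
    ring
  have hexp : exp (-1 * y ^ 2) = exp (-(1 / 2) * y ^ 2) * exp (-(1 / 2) * y ^ 2) := by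
    rw [← exp_add]
    ring_nf
  simp_rw [hsplit]
  rw [integral_const_mul, integral_h5Numerator_sq_mul_exp_mul_cos, h5_sq, hexp]
  field_simp
  rw [eval_mul, sq_sqrt pi_pos.le]
  ring

theorem stmt_2 :
    ∫ y : ℝ, ∫ x : ℝ,
      Real.exp (-(x ^ 2 + y ^ 2) / 2) * h5 x ^ 2 * h5 y ^ 2 * Real.cos (x * y)
    = 49 * Real.sqrt 2 := by
  simp_rw [integral_exp_mul_h5_sq_mul_h5_sq_mul_cos]
  rw [integral_const_mul, integral_h5Numerator_sq_mul_h5SqCosTransform_mul_exp,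
    sqrt_mul zero_le_two]
  field_simp
  linear_combination 176400 * sq_sqrt pi_pos.le
end

section
/- For every real $z$ with $0 < z < 1$, $\int_{\mathbb{R}}\int_{\mathbb{R}} \mathrm{sign}(u)\,\mathrm{sign}(v)\, e^{-u^2-v^2+2zuv}\,du\,dv = \frac{2\arcsin(z)}{\sqrt{1-z^2}}$. -/
/-! After completing the square, `-u² - v² + 2zuv = -(u - zv)² - (1 - z²)v²`, the inner
integral is `2 sign(v) e^{-(1-z²)v²} F(zv)` with `F x = ∫₀ˣ e^{-t²} dt`, because `sign(t + c)`
integrates the even Gaussian to its mass over `[-c, c]`. The outer integrand is even, so with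
`a = 1 - z²` the integral is `4 G(z)` for `G b = ∫₀^∞ e^{-av²} F(bv) dv`. Differentiating under
the integral sign, `G' b = ∫₀^∞ v e^{-(a+b²)v²} dv = 1 / (2(a + b²))`, hence
`G b = arctan(b/√a) / (2√a)`, and `arctan(z / √(1 - z²)) = arcsin z`. -/

open MeasureTheory Real Set Filter

-- `(√π / 2) · erf x`
noncomputable def gaussPrimitive (x : ℝ) : ℝ := ∫ t in (0 : ℝ)..x, exp (-t ^ 2)

lemma hasDerivAt_gaussPrimitive (x : ℝ) : HasDerivAt gaussPrimitive (exp (-x ^ 2)) x :=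
  (by fun_prop : Continuous fun t : ℝ ↦ exp (-t ^ 2)).integral_hasStrictDerivAt 0 x |>.hasDerivAt

@[fun_prop]
lemma continuous_gaussPrimitive : Continuous gaussPrimitive :=
  continuous_iff_continuousAt.2 fun x ↦ (hasDerivAt_gaussPrimitive x).continuousAt

@[simp]
lemma gaussPrimitive_zero : gaussPrimitive 0 = 0 := intervalIntegral.integral_same

lemma gaussPrimitive_neg (x : ℝ) : gaussPrimitive (-x) = -gaussPrimitive x := by
  have h := intervalIntegral.integral_comp_neg (a := 0) (b := x) fun t ↦ exp (-t ^ 2)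
  simp only [even_two, Even.neg_pow, neg_zero] at h
  rw [gaussPrimitive, gaussPrimitive, intervalIntegral.integral_symm, h]

lemma abs_gaussPrimitive_le (x : ℝ) : |gaussPrimitive x| ≤ |x| := by
  simpa [gaussPrimitive] using intervalIntegral.norm_integral_le_of_norm_le_const (a := 0) (b := x)
    (C := 1) (f := fun t ↦ exp (-t ^ 2)) fun t _ ↦ by simpa using sq_nonneg t

lemma sign_mul_gaussPrimitive (z v : ℝ) :
    sign v * gaussPrimitive (z * v) = gaussPrimitive (z * |v|) := by
  rcases lt_trichotomy v 0 with hv | rfl | hv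
  · rw [sign_of_neg hv, abs_of_neg hv, mul_neg, gaussPrimitive_neg, neg_one_mul]
  · simp
  · rw [sign_of_pos hv, abs_of_pos hv, one_mul]

lemma Real.measurable_sign : Measurable Real.sign :=
  Measurable.ite measurableSet_Iio measurable_const <|
    Measurable.ite measurableSet_Ioi measurable_const measurable_const

lemma Real.abs_sign_le_one (x : ℝ) : |sign x| ≤ 1 := by
  rcases sign_apply_eq x with h | h | h <;> simp [h]

lemma integral_Ioi_mul_exp_neg_mul_sq {b : ℝ} (hb : 0 < b) :
    ∫ r in Ioi (0 : ℝ), r * exp (-b * r ^ 2) = (2 * b)⁻¹ := by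
  have := integral_mul_cexp_neg_mul_sq (b := (b : ℂ)) (by simpa using hb)
  rw [← Complex.ofReal_inj, ← integral_complex_ofReal]
  push_cast
  exact this

lemma intervalIntegral_neg_self_of_even {g : ℝ → ℝ} (hg : Integrable g)
    (heven : ∀ t, g (-t) = g t) (c : ℝ) :
    ∫ t in -c..c, g t = 2 * ∫ t in 0..c, g t := by
  have h := intervalIntegral.integral_comp_neg (a := 0) (b := c) g
  simp only [heven, neg_zero] at h
  rw [← intervalIntegral.integral_add_adjacent_intervals (b := 0) hg.intervalIntegrable
    hg.intervalIntegrable, ← h, two_mul]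

lemma integral_sign_add_mul_of_even {g : ℝ → ℝ} (hg : Integrable g)
    (heven : ∀ t, g (-t) = g t) (c : ℝ) :
    ∫ t, sign (t + c) * g t = 2 * ∫ t in 0..c, g t := by
  have hint : Integrable (fun t ↦ sign (t + c) * g t) :=
    hg.bdd_mul ((measurable_sign.comp (measurable_add_const c)).aestronglyMeasurable)
      (Eventually.of_forall fun t ↦ abs_sign_le_one (t + c))
  have hright : ∫ t in Ioi (-c), sign (t + c) * g t = ∫ t in Ioi (-c), g t :=
    setIntegral_congr_fun measurableSet_Ioi fun t ht ↦ by
      simp [sign_of_pos (neg_lt_iff_pos_add.1 ht)]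
  have hleft : ∫ t in Iic (-c), sign (t + c) * g t = -∫ t in Ioi c, g t := by
    calc ∫ t in Iic (-c), sign (t + c) * g t = ∫ t in Iio (-c), -g t := by
          rw [integral_Iic_eq_integral_Iio]
          exact setIntegral_congr_fun measurableSet_Iio fun t ht ↦ by
            simp [sign_of_neg (lt_neg_iff_add_neg.1 ht)]
      _ = -∫ t in Ioi c, g (-t) := by
          rw [integral_neg, integral_comp_neg_Ioi, integral_Iic_eq_integral_Iio]
      _ = -∫ t in Ioi c, g t := by simp only [heven]
  rw [← intervalIntegral.integral_Iic_add_Ioi hint.integrableOn hint.integrableOn, hleft, hright,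
    ← intervalIntegral_neg_self_of_even hg heven,
    ← intervalIntegral.integral_Ioi_sub_Ioi' hg.integrableOn hg.integrableOn]
  ring

lemma integral_sign_mul_exp_neg_sq_sub (c : ℝ) :
    ∫ u, sign u * exp (-(u - c) ^ 2) = 2 * gaussPrimitive c := by
  rw [← integral_add_right_eq_self _ c]
  simpa [gaussPrimitive] using integral_sign_add_mul_of_even
    (by simpa using integrable_exp_neg_mul_sq one_pos) (by simp) c

lemma integral_sign_mul_sign_mul_exp (z v : ℝ) :
    ∫ u, sign u * sign v * exp (-u ^ 2 - v ^ 2 + 2 * z * u * v)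
      = 2 * exp (-(1 - z ^ 2) * v ^ 2) * gaussPrimitive (z * |v|) := by
  have hsq (u : ℝ) : sign u * sign v * exp (-u ^ 2 - v ^ 2 + 2 * z * u * v)
      = sign v * exp (-(1 - z ^ 2) * v ^ 2) * (sign u * exp (-(u - z * v) ^ 2)) := by
    rw [show -u ^ 2 - v ^ 2 + 2 * z * u * v = -(1 - z ^ 2) * v ^ 2 + -(u - z * v) ^ 2 by ring,
      exp_add]
    ring
  simp_rw [hsq, integral_const_mul, integral_sign_mul_exp_neg_sq_sub, ← sign_mul_gaussPrimitive]
  ring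

lemma hasDerivAt_integral_exp_mul_gaussPrimitive {a : ℝ} (ha : 0 < a) (b : ℝ) :
    HasDerivAt (fun b ↦ ∫ v in Ioi (0 : ℝ), exp (-a * v ^ 2) * gaussPrimitive (b * v))
      (2 * (a + b ^ 2))⁻¹ b := by
  have hbound : Integrable (fun v : ℝ ↦ ‖v * exp (-a * v ^ 2)‖) :=
    (integrable_mul_exp_neg_mul_sq ha).norm
  have hint : Integrable (fun v ↦ exp (-a * v ^ 2) * gaussPrimitive (b * v)) := by
    refine (hbound.const_mul |b|).mono' (by fun_prop) (Eventually.of_forall fun v ↦ ?_)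
    have := abs_gaussPrimitive_le (b * v)
    rw [abs_mul] at this
    simp only [norm_mul, norm_eq_abs, abs_exp]
    nlinarith [exp_pos (-a * v ^ 2)]
  have hderiv : ∫ v in Ioi (0 : ℝ), exp (-a * v ^ 2) * (exp (-(b * v) ^ 2) * v)
      = (2 * (a + b ^ 2))⁻¹ := by
    rw [← integral_Ioi_mul_exp_neg_mul_sq (by positivity : 0 < a + b ^ 2)]
    refine integral_congr_ae (Eventually.of_forall fun v ↦ ?_)
    dsimp only
    rw [← mul_assoc, ← exp_add, mul_comm]
    congr 2
    ring
  rw [← hderiv]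
  refine (hasDerivAt_integral_of_dominated_loc_of_deriv_le (μ := volume.restrict (Ioi 0))
    (F := fun x v ↦ exp (-a * v ^ 2) * gaussPrimitive (x * v))
    (F' := fun x v ↦ exp (-a * v ^ 2) * (exp (-(x * v) ^ 2) * v))
    (Metric.ball_mem_nhds b one_pos)
    (Eventually.of_forall fun x ↦ by fun_prop) hint.integrableOn (by fun_prop)
    (bound := fun v ↦ ‖v * exp (-a * v ^ 2)‖) ?_ hbound.integrableOn ?_).2
  · refine Eventually.of_forall fun v x _ ↦ ?_
    rw [norm_mul, norm_mul, norm_mul, mul_left_comm, mul_comm ‖v‖]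
    exact mul_le_of_le_one_left (by positivity) (by simpa using sq_nonneg (x * v))
  · refine Eventually.of_forall fun v x _ ↦ ?_
    have := ((hasDerivAt_gaussPrimitive (x * v)).comp x
      ((hasDerivAt_id x).mul_const v)).const_mul (exp (-a * v ^ 2))
    simpa only [id, one_mul, Function.comp_def] using this

lemma hasDerivAt_arctan_div_sqrt {a : ℝ} (ha : 0 < a) (b : ℝ) :
    HasDerivAt (fun b ↦ arctan (b / √a) / (2 * √a)) (2 * (a + b ^ 2))⁻¹ b := by
  refine (((hasDerivAt_id' b).div_const √a).arctan.div_const (2 * √a)).congr_deriv ?_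
  rw [div_pow, sq_sqrt ha.le]
  field_simp
  rw [sq_sqrt ha.le]

lemma integral_exp_mul_gaussPrimitive {a : ℝ} (ha : 0 < a) (b : ℝ) :
    ∫ v in Ioi (0 : ℝ), exp (-a * v ^ 2) * gaussPrimitive (b * v)
      = arctan (b / √a) / (2 * √a) := by
  have h := eq_of_fderiv_eq (𝕜 := ℝ)
    (fun b ↦ (hasDerivAt_integral_exp_mul_gaussPrimitive ha b).differentiableAt)
    (fun b ↦ (hasDerivAt_arctan_div_sqrt ha b).differentiableAt)
    (fun b ↦ (hasDerivAt_integral_exp_mul_gaussPrimitive ha b).hasFDerivAt.fderiv.trans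
      (hasDerivAt_arctan_div_sqrt ha b).hasFDerivAt.fderiv.symm) 0 (by simp)
  exact congrFun h b

theorem integral_integral_sign_mul_sign_mul_exp {z : ℝ} (hz : z ∈ Ioo (-1) 1) :
    ∫ v : ℝ, ∫ u : ℝ, sign u * sign v * exp (-u ^ 2 - v ^ 2 + 2 * z * u * v)
      = 2 * arcsin z / √(1 - z ^ 2) := by
  have ha : 0 < 1 - z ^ 2 := by nlinarith [hz.1, hz.2]
  simp_rw [integral_sign_mul_sign_mul_exp, mul_assoc]
  have heven := integral_comp_abs
    (f := fun v ↦ 2 * (exp (-(1 - z ^ 2) * v ^ 2) * gaussPrimitive (z * v)))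
  simp only [sq_abs] at heven
  rw [heven, integral_const_mul, integral_exp_mul_gaussPrimitive ha, arcsin_eq_arctan hz]
  field_simp

theorem stmt_5 (z : ℝ) (hz : 0 < z) (hz1 : z < 1) :
    ∫ v : ℝ, ∫ u : ℝ,
      Real.sign u * Real.sign v * Real.exp (-u ^ 2 - v ^ 2 + 2 * z * u * v)
    = 2 * Real.arcsin z / Real.sqrt (1 - z ^ 2) :=
  integral_integral_sign_mul_sign_mul_exp ⟨by linarith, hz1⟩
end

section
/- Let $f,g:\mathbb{R}^2\to[-1,1]$ be measurable functions, and for complex $z = a+bi$ with $|a| < 1$ define $H(z) = \frac{1}{2\pi(1-z^2)}\int_{\mathbb{R}^2\times\mathbb{R}^2} f(x)g(y)\exp\left(\frac{-\|x\|_2^2-\|y\|_2^2+2z\langle x,y\rangle}{1-z^2}\right)dx\,dy$. Then $|H(a+bi)| \le \frac{\pi((1+a)^2+b^2)((1-a)^2+b^2)}{2(1-a^2)\sqrt{(1-a^2)^2+b^4+2(1+a^2)b^2}}$. -/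
open MeasureTheory Real Complex

/-
With `D = 1 - z²`, the real part of the exponent is `-p(‖x‖² + ‖y‖²) + 2r⟨x, y⟩` where
`p = Re (1/D)` and `r = Re (z/D)`. Since `|f g| ≤ 1`, the triangle inequality bounds `|H(z)|` by
`1/(2π|D|)` times the square of the one-dimensional Gaussian integral
`∫∫ exp (2ruv - p(u² + v²)) du dv = π / √(p² - r²)`. Partial fractions give
`p ± r = Re (1/(1 ∓ z))`, whence `p² - r² = (1 - a²)/|D|²`, and the bound becomes `π|D|/(2(1 - a²))`,
which is the right-hand side because `|D|² = |1 - z|²|1 + z|²`.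
-/

section BilinearGaussian

variable {p r : ℝ}

noncomputable def bilinGaussian (p r u v : ℝ) : ℝ := Real.exp (2 * r * u * v - p * (u ^ 2 + v ^ 2))

lemma bilinGaussian_eq_mul (hp : p ≠ 0) (u v : ℝ) :
    bilinGaussian p r u v =
      Real.exp (-((p ^ 2 - r ^ 2) / p) * u ^ 2) * Real.exp (-p * (v - r * u / p) ^ 2) := by
  rw [bilinGaussian, ← Real.exp_add]
  congr 1
  field_simp
  ring

lemma integrable_bilinGaussian (hp : 0 < p) (u : ℝ) : Integrable (bilinGaussian p r u) := by
  rw [show bilinGaussian p r u = _ from funext (bilinGaussian_eq_mul hp.ne' u)]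
  exact ((integrable_exp_neg_mul_sq hp).comp_sub_right (r * u / p)).const_mul _

lemma integral_bilinGaussian (hp : 0 < p) (u : ℝ) :
    ∫ v, bilinGaussian p r u v = Real.exp (-((p ^ 2 - r ^ 2) / p) * u ^ 2) * √(π / p) := by
  simp_rw [bilinGaussian_eq_mul hp.ne']
  rw [integral_const_mul,
    integral_sub_right_eq_self (fun v => Real.exp (-p * v ^ 2)) (r * u / p), integral_gaussian]

lemma integrable_integral_bilinGaussian (hp : 0 < p) (hpr : r ^ 2 < p ^ 2) :
    Integrable fun u => ∫ v, bilinGaussian p r u v := by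
  simp_rw [integral_bilinGaussian hp]
  exact (integrable_exp_neg_mul_sq (div_pos (by linarith) hp)).mul_const _

lemma integral_integral_bilinGaussian (hp : 0 < p) (hpr : r ^ 2 < p ^ 2) :
    ∫ u, ∫ v, bilinGaussian p r u v = π / √(p ^ 2 - r ^ 2) := by
  have hq : 0 < p ^ 2 - r ^ 2 := by linarith
  simp_rw [integral_bilinGaussian hp]
  rw [integral_mul_const, integral_gaussian, ← Real.sqrt_mul (by positivity),
    div_mul_div_comm, div_mul_cancel₀ _ hp.ne', Real.sqrt_div' _ hq.le,
    Real.sqrt_mul_self pi_pos.le]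

end BilinearGaussian

lemma norm_integral_integral_prod_le_sq {α E : Type*} [MeasurableSpace α] {μ : Measure α}
    [SFinite μ] [NormedAddCommGroup E] [NormedSpace ℝ E] {F : α × α → α × α → E}
    {G : α → α → ℝ} (hG : ∀ u, Integrable (G u) μ) (hG' : Integrable (fun u => ∫ v, G u v ∂μ) μ)
    (hF : ∀ x y, ‖F x y‖ ≤ G x.1 y.1 * G x.2 y.2) :
    ‖∫ x, ∫ y, F x y ∂μ.prod μ ∂μ.prod μ‖ ≤ (∫ u, ∫ v, G u v ∂μ ∂μ) ^ 2 := by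
  have hinner : ∀ x : α × α, ‖∫ y, F x y ∂μ.prod μ‖ ≤
      (∫ v, G x.1 v ∂μ) * ∫ v, G x.2 v ∂μ := fun x => by
    rw [← integral_prod_mul]
    exact norm_integral_le_of_norm_le ((hG x.1).mul_prod (hG x.2)) (.of_forall (hF x))
  rw [sq, ← integral_prod_mul]
  exact norm_integral_le_of_norm_le (hG'.mul_prod hG') (.of_forall hinner)

section PartialFractions

variable {z : ℂ}

lemma re_inv_pos_of_re_pos {w : ℂ} (hw : 0 < w.re) : 0 < w⁻¹.re := by
  rw [inv_re]
  exact div_pos hw (normSq_pos.mpr fun h => by simp [h] at hw)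

lemma one_sub_ne_zero_of_abs_re_lt_one (hz : |z.re| < 1) : 1 - z ≠ 0 := fun h => by
  have := congrArg re h
  simp only [sub_re, one_re, zero_re] at this
  linarith [(abs_lt.mp hz).2]

lemma one_add_ne_zero_of_abs_re_lt_one (hz : |z.re| < 1) : 1 + z ≠ 0 := fun h => by
  have := congrArg re h
  simp only [add_re, one_re, zero_re] at this
  linarith [(abs_lt.mp hz).1]

lemma one_sub_sq_ne_zero_of_abs_re_lt_one (hz : |z.re| < 1) : 1 - z ^ 2 ≠ 0 := by
  rw [show 1 - z ^ 2 = (1 - z) * (1 + z) by ring]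
  exact mul_ne_zero (one_sub_ne_zero_of_abs_re_lt_one hz) (one_add_ne_zero_of_abs_re_lt_one hz)

lemma re_inv_one_sub_sq (hz : |z.re| < 1) :
    (1 - z ^ 2)⁻¹.re = ((1 - z)⁻¹.re + (1 + z)⁻¹.re) / 2 := by
  have h₁ := one_sub_ne_zero_of_abs_re_lt_one hz
  have h₂ := one_add_ne_zero_of_abs_re_lt_one hz
  have h₃ := one_sub_sq_ne_zero_of_abs_re_lt_one hz
  have : (1 - z ^ 2)⁻¹ = ((1 - z)⁻¹ + (1 + z)⁻¹) / 2 := by field_simp; ring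
  rw [this, div_ofNat_re, add_re]

lemma re_mul_inv_one_sub_sq (hz : |z.re| < 1) :
    (z * (1 - z ^ 2)⁻¹).re = ((1 - z)⁻¹.re - (1 + z)⁻¹.re) / 2 := by
  have h₁ := one_sub_ne_zero_of_abs_re_lt_one hz
  have h₂ := one_add_ne_zero_of_abs_re_lt_one hz
  have h₃ := one_sub_sq_ne_zero_of_abs_re_lt_one hz
  have : z * (1 - z ^ 2)⁻¹ = ((1 - z)⁻¹ - (1 + z)⁻¹) / 2 := by field_simp; ring
  rw [this, div_ofNat_re, sub_re]

lemma re_inv_one_sub_sq_pos (hz : |z.re| < 1) : 0 < (1 - z ^ 2)⁻¹.re := by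
  obtain ⟨h₁, h₂⟩ := abs_lt.mp hz
  rw [re_inv_one_sub_sq hz]
  have := re_inv_pos_of_re_pos (w := 1 - z) (by simp only [sub_re, one_re]; linarith)
  have := re_inv_pos_of_re_pos (w := 1 + z) (by simp only [add_re, one_re]; linarith)
  positivity

lemma re_inv_one_sub_sq_sq_sub_sq (hz : |z.re| < 1) :
    (1 - z ^ 2)⁻¹.re ^ 2 - (z * (1 - z ^ 2)⁻¹).re ^ 2 = (1 - z.re ^ 2) / ‖1 - z ^ 2‖ ^ 2 := by
  have hfac : ‖1 - z ^ 2‖ = ‖1 - z‖ * ‖1 + z‖ := by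
    rw [← norm_mul]; ring_nf
  have h₁ := norm_pos_iff.mpr (one_sub_ne_zero_of_abs_re_lt_one hz)
  have h₂ := norm_pos_iff.mpr (one_add_ne_zero_of_abs_re_lt_one hz)
  rw [re_inv_one_sub_sq hz, re_mul_inv_one_sub_sq hz, Complex.inv_re, Complex.inv_re, ← Complex.sq_norm, ← Complex.sq_norm,
    hfac]
  simp only [sub_re, add_re, one_re]
  field_simp
  ring

end PartialFractions

lemma re_div_one_sub_sq (z : ℂ) (A C : ℝ) :
    (((A : ℂ) + 2 * z * C) / (1 - z ^ 2)).re =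
      A * (1 - z ^ 2)⁻¹.re + 2 * C * (z * (1 - z ^ 2)⁻¹).re := by
  have : ((A : ℂ) + 2 * z * C) / (1 - z ^ 2) =
      A * (1 - z ^ 2)⁻¹ + ((2 * C : ℝ) : ℂ) * (z * (1 - z ^ 2)⁻¹) := by push_cast; ring
  rw [this, add_re, re_ofReal_mul, re_ofReal_mul]

lemma norm_ofReal_mul_exp_le {c : ℝ} (hc : |c| ≤ 1) (w : ℂ) :
    ‖(c : ℂ) * Complex.exp w‖ ≤ Real.exp w.re := by
  rw [norm_mul, norm_real, norm_exp, Real.norm_eq_abs]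
  exact mul_le_of_le_one_left (Real.exp_nonneg _) hc

lemma norm_mul_exp_div_one_sub_sq_le (z : ℂ) {c : ℝ} (hc : |c| ≤ 1) (x y : ℝ × ℝ) :
    ‖(c : ℂ) * Complex.exp ((-(x.1 ^ 2 + x.2 ^ 2) - (y.1 ^ 2 + y.2 ^ 2)
        + 2 * z * (x.1 * y.1 + x.2 * y.2) : ℂ) / (1 - z ^ 2))‖ ≤
      bilinGaussian (1 - z ^ 2)⁻¹.re (z * (1 - z ^ 2)⁻¹).re x.1 y.1 *
        bilinGaussian (1 - z ^ 2)⁻¹.re (z * (1 - z ^ 2)⁻¹).re x.2 y.2 := by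
  refine (norm_ofReal_mul_exp_le hc _).trans_eq ?_
  have hnum : ((-(x.1 ^ 2 + x.2 ^ 2) - (y.1 ^ 2 + y.2 ^ 2)
      + 2 * z * (x.1 * y.1 + x.2 * y.2)) : ℂ) =
      ((-(x.1 ^ 2 + x.2 ^ 2) - (y.1 ^ 2 + y.2 ^ 2) : ℝ) : ℂ)
        + 2 * z * ((x.1 * y.1 + x.2 * y.2 : ℝ) : ℂ) := by push_cast; ring
  rw [hnum, re_div_one_sub_sq, bilinGaussian, bilinGaussian, ← Real.exp_add]
  ring_nf

lemma norm_one_sub_sq_sq (a b : ℝ) :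
    ‖1 - ((a : ℂ) + b * I) ^ 2‖ ^ 2 = (1 - a ^ 2) ^ 2 + b ^ 4 + 2 * (1 + a ^ 2) * b ^ 2 := by
  rw [Complex.sq_norm, normSq_apply]
  simp only [sub_re, sub_im, one_re, one_im, sq, mul_re, mul_im, add_re, add_im, ofReal_re,
    ofReal_im, I_re, I_im]
  ring

theorem stmt_7_general (f g : ℝ × ℝ → ℝ)
    (hf1 : ∀ x, f x ∈ Set.Icc (-1 : ℝ) 1) (hg1 : ∀ y, g y ∈ Set.Icc (-1 : ℝ) 1)
    (a b : ℝ) (ha : |a| < 1) :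
    ‖((1 / (2 * Real.pi * (1 - (a + b * Complex.I) ^ 2))) *
        ∫ x : ℝ × ℝ, ∫ y : ℝ × ℝ,
          (f x * g y : ℝ) *
            Complex.exp (((-(x.1 ^ 2 + x.2 ^ 2) - (y.1 ^ 2 + y.2 ^ 2)
              + 2 * (a + b * Complex.I) * (x.1 * y.1 + x.2 * y.2)) : ℂ)
              / (1 - (a + b * Complex.I) ^ 2)))‖
    ≤ Real.pi * ((1 + a) ^ 2 + b ^ 2) * ((1 - a) ^ 2 + b ^ 2)
        / (2 * (1 - a ^ 2) *
            Real.sqrt ((1 - a ^ 2) ^ 2 + b ^ 4 + 2 * (1 + a ^ 2) * b ^ 2)) := by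
  set z : ℂ := a + b * I
  have hre : z.re = a := by simp [z]
  have hz : |z.re| < 1 := hre ▸ ha
  set p := (1 - z ^ 2)⁻¹.re
  set r := (z * (1 - z ^ 2)⁻¹).re
  have hp : 0 < p := re_inv_one_sub_sq_pos hz
  have hpr : p ^ 2 - r ^ 2 = (1 - a ^ 2) / ‖1 - z ^ 2‖ ^ 2 := by
    rw [re_inv_one_sub_sq_sq_sub_sq hz, hre]
  have hD : 0 < ‖1 - z ^ 2‖ := norm_pos_iff.mpr (one_sub_sq_ne_zero_of_abs_re_lt_one hz)
  have hfg : ∀ x y, |f x * g y| ≤ 1 := fun x y => by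
    rw [abs_mul]
    exact mul_le_one₀ (abs_le.mpr (hf1 x)) (abs_nonneg _) (abs_le.mpr (hg1 y))
  have ha2 : 0 < 1 - a ^ 2 := by nlinarith [abs_lt.mp ha]
  have hrp : r ^ 2 < p ^ 2 := sub_pos.mp (hpr ▸ div_pos ha2 (pow_pos hD 2))
  have hint := norm_integral_integral_prod_le_sq (μ := volume) (integrable_bilinGaussian hp)
    (integrable_integral_bilinGaussian hp hrp)
    fun x y => norm_mul_exp_div_one_sub_sq_le z (hfg x y) x y
  rw [integral_integral_bilinGaussian hp hrp, hpr] at hint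
  have hS : ‖1 - z ^ 2‖ ^ 2 = (1 - a ^ 2) ^ 2 + b ^ 4 + 2 * (1 + a ^ 2) * b ^ 2 :=
    norm_one_sub_sq_sq a b
  rw [norm_mul, mul_assoc π, show ((1 + a) ^ 2 + b ^ 2) * ((1 - a) ^ 2 + b ^ 2) =
    (1 - a ^ 2) ^ 2 + b ^ 4 + 2 * (1 + a ^ 2) * b ^ 2 by ring, ← hS, Real.sqrt_sq hD.le]
  calc _ ≤ ‖1 / (2 * π * (1 - z ^ 2))‖ * (π / √((1 - a ^ 2) / ‖1 - z ^ 2‖ ^ 2)) ^ 2 := by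
        gcongr
        exact hint
    _ = _ := by
        simp only [norm_div, norm_one, norm_mul, Complex.norm_ofNat, norm_real, Real.norm_eq_abs,
          abs_of_pos pi_pos, div_pow, Real.sq_sqrt (div_pos ha2 (pow_pos hD 2)).le]
        field_simp

theorem stmt_7 (f g : ℝ × ℝ → ℝ) (hf : Measurable f) (hg : Measurable g)
    (hf1 : ∀ x, f x ∈ Set.Icc (-1 : ℝ) 1) (hg1 : ∀ y, g y ∈ Set.Icc (-1 : ℝ) 1)
    (a b : ℝ) (ha : |a| < 1) :
    ‖((1 / (2 * Real.pi * (1 - (a + b * Complex.I) ^ 2))) *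
        ∫ x : ℝ × ℝ, ∫ y : ℝ × ℝ,
          (f x * g y : ℝ) *
            Complex.exp (((-(x.1 ^ 2 + x.2 ^ 2) - (y.1 ^ 2 + y.2 ^ 2)
              + 2 * (a + b * Complex.I) * (x.1 * y.1 + x.2 * y.2)) : ℂ)
              / (1 - (a + b * Complex.I) ^ 2)))‖
    ≤ Real.pi * ((1 + a) ^ 2 + b ^ 2) * ((1 - a) ^ 2 + b ^ 2)
        / (2 * (1 - a ^ 2) *
            Real.sqrt ((1 - a ^ 2) ^ 2 + b ^ 4 + 2 * (1 + a ^ 2) * b ^ 2)) :=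
  stmt_7_general f g hf1 hg1 a b ha
end

section
/- For every $x\in(0,1)$, $\cosh(x)\sqrt{1-x^2} < 1$. -/
open Real

/-- Square root of `1 - x ^ 2 < exp (-x ^ 2)`, i.e. of `1 + t < exp t` at `t = -x ^ 2`. -/
theorem Real.sqrt_one_sub_sq_lt_exp {x : ℝ} (hx : x ≠ 0) :
    √(1 - x ^ 2) < exp (-(x ^ 2 / 2)) := by
  have hsq : exp (-(x ^ 2 / 2)) ^ 2 = exp (-x ^ 2) := by
    rw [← exp_nat_mul]; ring_nf
  rw [sqrt_lt' (exp_pos _), hsq]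
  linarith [add_one_lt_exp (neg_ne_zero.mpr (pow_ne_zero 2 hx))]

theorem Real.cosh_mul_sqrt_one_sub_sq_lt_one {x : ℝ} (hx : x ≠ 0) :
    cosh x * √(1 - x ^ 2) < 1 :=
  calc cosh x * √(1 - x ^ 2)
      ≤ exp (x ^ 2 / 2) * √(1 - x ^ 2) := by gcongr; exact cosh_le_exp_half_sq x
    _ < exp (x ^ 2 / 2) * exp (-(x ^ 2 / 2)) := by
        gcongr; exact sqrt_one_sub_sq_lt_exp hx
    _ = 1 := by rw [← exp_add, add_neg_cancel, exp_zero]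

theorem stmt_9_general (x : ℝ) (hx0 : 0 < x) :
    Real.cosh x * Real.sqrt (1 - x ^ 2) < 1 :=
  Real.cosh_mul_sqrt_one_sub_sq_lt_one hx0.ne'

theorem stmt_9 (x : ℝ) (hx0 : 0 < x) (hx1 : x < 1) :
    Real.cosh x * Real.sqrt (1 - x ^ 2) < 1 :=
  stmt_9_general x hx0
end

section
/- Let $f:(0,\infty)\to[-1,1]$ be measurable and define $I(y) = \int_0^\infty f(x)\exp(-\frac{x^2+y^2}{2})\sin(xy)\,dx$ for $y\ge 0$. Then $I$ is Lipschitz with constant $\sqrt{2}$. -/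
/-!
The `y`-derivative of the kernel `k(x, y) = exp (-(x² + y²)/2) sin (x y)` is
`exp (-r²/2) (x cos (x y) - y sin (x y))` with `r = √(x² + y²)`, so by Cauchy–Schwarz it is at
most `φ r = r exp (-r²/2)` in absolute value. As `r ≥ x`, it is bounded by the envelope
`sup_{r ≥ x} φ r`, which is `φ 1 = e^{-1/2}` for `x ≤ 1` and `φ x` for `x ≥ 1`. The envelope has
integral `e^{-1/2} + e^{-1/2}` over `(0, ∞)`, and `2 e^{-1/2} ≤ √2` because `e ≥ 2`; integrating
the mean value bound for `k` against `|f| ≤ 1` gives the Lipschitz estimate.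
-/

open MeasureTheory Real Set Filter Topology

noncomputable def gaussKernel (x y : ℝ) : ℝ := exp (-(x ^ 2 + y ^ 2) / 2) * sin (x * y)

noncomputable def gaussKernelEnvelope (x : ℝ) : ℝ :=
  if x ≤ 1 then exp (-1 / 2) else x * exp (-x ^ 2 / 2)

lemma mul_exp_neg_sq_div_two_le (r : ℝ) : r * exp (-r ^ 2 / 2) ≤ exp (-1 / 2) := by
  have h : r ≤ exp ((r ^ 2 - 1) / 2) := by
    nlinarith [add_one_le_exp ((r ^ 2 - 1) / 2), sq_nonneg (r - 1)]
  calc r * exp (-r ^ 2 / 2) ≤ exp ((r ^ 2 - 1) / 2) * exp (-r ^ 2 / 2) := by gcongr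
    _ = exp (-1 / 2) := by rw [← exp_add]; ring_nf

lemma antitoneOn_mul_exp_neg_sq_div_two :
    AntitoneOn (fun r : ℝ => r * exp (-r ^ 2 / 2)) (Ici 1) := by
  intro x (hx : 1 ≤ x) r _ hxr
  have h : r ≤ x * exp ((r ^ 2 - x ^ 2) / 2) := by
    have hlin := mul_le_mul_of_nonneg_left (add_one_le_exp ((r ^ 2 - x ^ 2) / 2))
      (by linarith : 0 ≤ x)
    nlinarith [mul_nonneg (sub_nonneg.2 hxr) (show 0 ≤ x * (r + x) - 2 by nlinarith)]
  calc r * exp (-r ^ 2 / 2) ≤ x * exp ((r ^ 2 - x ^ 2) / 2) * exp (-r ^ 2 / 2) := by gcongr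
    _ = x * exp (-x ^ 2 / 2) := by rw [mul_assoc, ← exp_add]; ring_nf

lemma mul_exp_neg_sq_div_two_le_gaussKernelEnvelope {x r : ℝ} (hxr : x ≤ r) :
    r * exp (-r ^ 2 / 2) ≤ gaussKernelEnvelope x := by
  unfold gaussKernelEnvelope
  split_ifs with hx
  · exact mul_exp_neg_sq_div_two_le r
  · have hx : 1 ≤ x := (not_le.1 hx).le
    exact antitoneOn_mul_exp_neg_sq_div_two hx (hx.trans hxr) hxr

lemma hasDerivAt_gaussKernel (x y : ℝ) :
    HasDerivAt (gaussKernel x)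
      (exp (-(x ^ 2 + y ^ 2) / 2) * (x * cos (x * y) - y * sin (x * y))) y := by
  have hexp : HasDerivAt (fun y : ℝ => -(x ^ 2 + y ^ 2) / 2) (-y) y :=
    (((hasDerivAt_pow 2 y).const_add (x ^ 2)).neg.div_const 2).congr_deriv (by ring)
  have hsin : HasDerivAt (fun y : ℝ => x * y) x y := by
    simpa using (hasDerivAt_id y).const_mul x
  exact (hexp.exp.mul hsin.sin).congr_deriv (by ring)

lemma abs_mul_cos_sub_mul_sin_le (x y θ : ℝ) :
    |x * cos θ - y * sin θ| ≤ √(x ^ 2 + y ^ 2) := by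
  refine abs_le_of_sq_le_sq ?_ (sqrt_nonneg _)
  rw [sq_sqrt (by positivity)]
  nlinarith [sin_sq_add_cos_sq θ, sq_nonneg (x * sin θ + y * cos θ)]

lemma abs_deriv_gaussKernel_le (x y : ℝ) :
    |exp (-(x ^ 2 + y ^ 2) / 2) * (x * cos (x * y) - y * sin (x * y))|
      ≤ gaussKernelEnvelope x := by
  set r := √(x ^ 2 + y ^ 2)
  have hr : r ^ 2 = x ^ 2 + y ^ 2 := sq_sqrt (by positivity)
  have hxr : x ≤ r := le_sqrt_of_sq_le (by nlinarith)
  calc |exp (-(x ^ 2 + y ^ 2) / 2) * (x * cos (x * y) - y * sin (x * y))|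
      ≤ exp (-(x ^ 2 + y ^ 2) / 2) * r := by
        rw [abs_mul, abs_exp]
        gcongr
        exact abs_mul_cos_sub_mul_sin_le x y _
    _ = r * exp (-r ^ 2 / 2) := by rw [hr, mul_comm]
    _ ≤ gaussKernelEnvelope x := mul_exp_neg_sq_div_two_le_gaussKernelEnvelope hxr

lemma abs_gaussKernel_sub_le (x y₁ y₂ : ℝ) :
    |gaussKernel x y₁ - gaussKernel x y₂| ≤ gaussKernelEnvelope x * |y₁ - y₂| := by
  simpa only [Real.norm_eq_abs] using
    Convex.norm_image_sub_le_of_norm_hasDerivWithin_le (s := univ)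
      (fun y _ => (hasDerivAt_gaussKernel x y).hasDerivWithinAt)
      (fun y _ => by simpa only [Real.norm_eq_abs] using abs_deriv_gaussKernel_le x y)
      convex_univ (mem_univ y₂) (mem_univ y₁)

lemma hasDerivAt_neg_exp_neg_sq_div_two (x : ℝ) :
    HasDerivAt (fun x : ℝ => -exp (-x ^ 2 / 2)) (x * exp (-x ^ 2 / 2)) x :=
  ((hasDerivAt_pow 2 x).neg.div_const 2).exp.neg.congr_deriv (by simp only [Pi.neg_apply]; ring)

lemma integrable_mul_exp_neg_sq_div_two : Integrable (fun x : ℝ => x * exp (-x ^ 2 / 2)) :=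
  (integrable_mul_exp_neg_mul_sq (b := 1 / 2) (by norm_num)).congr
    (ae_of_all _ fun x => by ring_nf)

lemma integral_Ioi_one_mul_exp_neg_sq_div_two :
    ∫ x in Ioi (1 : ℝ), x * exp (-x ^ 2 / 2) = exp (-1 / 2) := by
  have hlim : Tendsto (fun x : ℝ => -exp (-x ^ 2 / 2)) atTop (𝓝 0) := by
    have : Tendsto (fun x : ℝ => -x ^ 2 / 2) atTop atBot :=
      (tendsto_neg_atBot_iff.2 (tendsto_pow_atTop two_ne_zero)).atBot_div_const two_pos
    simpa using (tendsto_exp_atBot.comp this).neg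
  rw [integral_Ioi_of_hasDerivAt_of_tendsto' (fun x _ => hasDerivAt_neg_exp_neg_sq_div_two x)
    integrable_mul_exp_neg_sq_div_two.integrableOn hlim]
  norm_num

lemma gaussKernelEnvelope_eqOn_Ioc :
    EqOn gaussKernelEnvelope (fun _ => exp (-1 / 2)) (Ioc 0 1) :=
  fun _ hx => if_pos hx.2

lemma gaussKernelEnvelope_eqOn_Ioi :
    EqOn gaussKernelEnvelope (fun x => x * exp (-x ^ 2 / 2)) (Ioi 1) :=
  fun _ hx => if_neg (not_le.2 hx)

lemma integrableOn_gaussKernelEnvelope : IntegrableOn gaussKernelEnvelope (Ioi 0) := by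
  rw [← Ioc_union_Ioi_eq_Ioi zero_le_one]
  refine IntegrableOn.union ?_ ?_
  · exact (integrableOn_const (by simp)).congr_fun gaussKernelEnvelope_eqOn_Ioc.symm
      measurableSet_Ioc
  · exact integrable_mul_exp_neg_sq_div_two.integrableOn.congr_fun
      gaussKernelEnvelope_eqOn_Ioi.symm measurableSet_Ioi

lemma integral_gaussKernelEnvelope :
    ∫ x in Ioi 0, gaussKernelEnvelope x = 2 * exp (-1 / 2) := by
  have hint := integrableOn_gaussKernelEnvelope
  rw [← Ioc_union_Ioi_eq_Ioi zero_le_one] at hint ⊢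
  rw [setIntegral_union (Ioc_disjoint_Ioi le_rfl) measurableSet_Ioi
      (hint.mono_set subset_union_left) (hint.mono_set subset_union_right),
    setIntegral_congr_fun measurableSet_Ioc gaussKernelEnvelope_eqOn_Ioc,
    setIntegral_congr_fun measurableSet_Ioi gaussKernelEnvelope_eqOn_Ioi,
    integral_Ioi_one_mul_exp_neg_sq_div_two, MeasureTheory.setIntegral_const,
    volume_real_Ioc_of_le zero_le_one, smul_eq_mul]
  ring

lemma two_mul_exp_neg_half_le_sqrt_two : 2 * exp (-1 / 2) ≤ √2 := by
  have hsq : exp (-1 / 2) ^ 2 * exp 1 = 1 := by rw [← exp_nat_mul, ← exp_add]; norm_num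
  have he : (2 : ℝ) ≤ exp 1 := by linarith [add_one_le_exp (1 : ℝ)]
  refine le_sqrt_of_sq_le ?_
  nlinarith [exp_pos (-1 / 2)]

section BoundedWeight

variable {f : ℝ → ℝ} {s : Set ℝ}

lemma integrableOn_mul_gaussKernel (hs : MeasurableSet s) (hf : Measurable f)
    (hf_le : ∀ x ∈ s, |f x| ≤ 1) (y : ℝ) : IntegrableOn (fun x => f x * gaussKernel x y) s := by
  refine Integrable.mono' (integrable_exp_neg_mul_sq (b := 1 / 2) (by norm_num)).integrableOn
    (hf.mul (by unfold gaussKernel; fun_prop)).aestronglyMeasurable ?_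
  refine (ae_restrict_iff' hs).2 (ae_of_all _ fun x hx => ?_)
  have hexp : exp (-(x ^ 2 + y ^ 2) / 2) ≤ exp (-(1 / 2) * x ^ 2) :=
    exp_le_exp.2 (by nlinarith [sq_nonneg y])
  rw [Real.norm_eq_abs, gaussKernel, abs_mul, abs_mul, abs_exp]
  calc |f x| * (exp (-(x ^ 2 + y ^ 2) / 2) * |sin (x * y)|)
      ≤ 1 * (exp (-(1 / 2) * x ^ 2) * 1) := by
        gcongr
        exacts [hf_le x hx, abs_sin_le_one _]
    _ = exp (-(1 / 2) * x ^ 2) := by ring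

lemma abs_setIntegral_mul_gaussKernel_sub_le (hs : MeasurableSet s) (hf : Measurable f)
    (hf_le : ∀ x ∈ s, |f x| ≤ 1) (henv : IntegrableOn gaussKernelEnvelope s) (y₁ y₂ : ℝ) :
    |(∫ x in s, f x * gaussKernel x y₁) - ∫ x in s, f x * gaussKernel x y₂|
      ≤ (∫ x in s, gaussKernelEnvelope x) * |y₁ - y₂| := by
  rw [← integral_sub (integrableOn_mul_gaussKernel hs hf hf_le y₁)
    (integrableOn_mul_gaussKernel hs hf hf_le y₂), ← integral_mul_const, ← Real.norm_eq_abs]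
  refine norm_integral_le_of_norm_le (henv.mul_const _)
    ((ae_restrict_iff' hs).2 (ae_of_all _ fun x hx => ?_))
  rw [Real.norm_eq_abs, ← mul_sub, abs_mul]
  calc |f x| * |gaussKernel x y₁ - gaussKernel x y₂|
      ≤ 1 * (gaussKernelEnvelope x * |y₁ - y₂|) := by
        gcongr
        exacts [hf_le x hx, abs_gaussKernel_sub_le x y₁ y₂]
    _ = gaussKernelEnvelope x * |y₁ - y₂| := one_mul _

end BoundedWeight

theorem stmt_11 (f : ℝ → ℝ) (hf : Measurable f)
    (hf1 : ∀ x ∈ Set.Ioi (0 : ℝ), f x ∈ Set.Icc (-1 : ℝ) 1)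
    (I : ℝ → ℝ)
    (hI : ∀ y, I y = ∫ x in Set.Ioi (0 : ℝ),
      f x * Real.exp (-(x ^ 2 + y ^ 2) / 2) * Real.sin (x * y)) :
    ∀ y₁ ∈ Set.Ici (0 : ℝ), ∀ y₂ ∈ Set.Ici (0 : ℝ),
      |I y₁ - I y₂| ≤ Real.sqrt 2 * |y₁ - y₂| := by
  intro y₁ _ y₂ _
  have hI' : ∀ y, I y = ∫ x in Ioi 0, f x * gaussKernel x y := fun y => by
    simp only [hI, gaussKernel, mul_assoc]
  have hf1' : ∀ x ∈ Ioi (0 : ℝ), |f x| ≤ 1 := fun x hx => abs_le.2 (hf1 x hx)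
  calc |I y₁ - I y₂| ≤ (∫ x in Ioi 0, gaussKernelEnvelope x) * |y₁ - y₂| := by
        rw [hI', hI']
        exact abs_setIntegral_mul_gaussKernel_sub_le measurableSet_Ioi hf hf1'
          integrableOn_gaussKernelEnvelope y₁ y₂
    _ = 2 * exp (-1 / 2) * |y₁ - y₂| := by rw [integral_gaussKernelEnvelope]
    _ ≤ √2 * |y₁ - y₂| := by gcongr; exact two_mul_exp_neg_half_le_sqrt_two
end

section
/- For every $a > 0$, $\int_a^\infty e^{-x^2/2}\,dx < \frac{16}{3e^2 a^3}$. -/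
/-!
With `t = x ^ 2 / 4` the Gaussian is `e^{-x²/2} = 16 (t e^{-t})² x⁻⁴`, and `t e^{-t} ≤ e⁻¹` with
equality only at `t = 1`. Hence `e^{-x²/2} ≤ 16 e⁻² x⁻⁴` for `x > 0`, strictly except at `x = 2`,
and integrating the majorant over `(a, ∞)` gives `16 / (3 e² a³)`.
-/

open MeasureTheory Real Set

theorem MeasureTheory.integral_lt_integral_of_ae_le_of_measure_setOf_lt_ne_zero
    {α : Type*} [MeasurableSpace α] {μ : Measure α} {f g : α → ℝ}
    (hfi : Integrable f μ) (hgi : Integrable g μ) (hle : f ≤ᵐ[μ] g)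
    (hlt : μ {x | f x < g x} ≠ 0) :
    ∫ x, f x ∂μ < ∫ x, g x ∂μ := by
  rw [← sub_pos, ← integral_sub hgi hfi,
    integral_pos_iff_support_of_nonneg_ae (hle.mono fun x => sub_nonneg.2) (hgi.sub hfi)]
  exact pos_iff_ne_zero.2 (mt (measure_mono_null fun x hx => (sub_pos.2 hx.out).ne') hlt)

theorem Real.mul_exp_neg_lt_exp_neg_one {t : ℝ} (ht : t ≠ 1) : t * exp (-t) < exp (-1) := by
  have h : t < exp (t - 1) := by linarith [add_one_lt_exp (sub_ne_zero.2 ht)]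
  calc t * exp (-t) < exp (t - 1) * exp (-t) := by gcongr
    _ = exp (-1) := by rw [← exp_add]; ring_nf

theorem Real.exp_neg_sq_div_two_eq {x : ℝ} (hx : 0 < x) :
    exp (-x ^ 2 / 2) = 16 * (x ^ 2 / 4 * exp (-(x ^ 2 / 4))) ^ 2 * x ^ (-4 : ℝ) := by
  rw [show (-4 : ℝ) = -(4 : ℕ) by norm_num, rpow_neg hx.le, rpow_natCast, mul_pow, ← exp_nat_mul]
  field_simp
  ring_nf

theorem Real.exp_neg_sq_div_two_le {x : ℝ} (hx : 0 < x) :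
    exp (-x ^ 2 / 2) ≤ 16 * exp (-1) ^ 2 * x ^ (-4 : ℝ) := by
  rw [exp_neg_sq_div_two_eq hx]
  gcongr
  exact mul_exp_neg_le_exp_neg_one _

theorem Real.exp_neg_sq_div_two_lt {x : ℝ} (hx : 0 < x) (hx₂ : x ≠ 2) :
    exp (-x ^ 2 / 2) < 16 * exp (-1) ^ 2 * x ^ (-4 : ℝ) := by
  have ht : x ^ 2 / 4 ≠ 1 := fun h =>
    hx₂ ((sq_eq_sq₀ hx.le zero_le_two).1 (by linarith))
  rw [exp_neg_sq_div_two_eq hx]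
  gcongr
  exact mul_exp_neg_lt_exp_neg_one ht

theorem stmt_13 (a : ℝ) (ha : 0 < a) :
    ∫ x in Set.Ioi a, Real.exp (-x ^ 2 / 2)
      < 16 / (3 * Real.exp 1 ^ 2 * a ^ 3) := by
  set g : ℝ → ℝ := fun x => 16 * exp (-1) ^ 2 * x ^ (-4 : ℝ)
  have hfi : IntegrableOn (fun x => exp (-x ^ 2 / 2)) (Ioi a) := by
    convert (integrable_exp_neg_mul_sq one_half_pos).integrableOn using 3
    ring
  have hgi : IntegrableOn g (Ioi a) :=
    (integrableOn_Ioi_rpow_of_lt (by norm_num) ha).const_mul _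
  have hle : ∀ᵐ x ∂volume.restrict (Ioi a), exp (-x ^ 2 / 2) ≤ g x :=
    (ae_restrict_mem measurableSet_Ioi).mono fun x hx => exp_neg_sq_div_two_le (ha.trans hx)
  have hlt : volume.restrict (Ioi a) {x | exp (-x ^ 2 / 2) < g x} ≠ 0 := by
    have hsub : Ioi (max a 2) ⊆ {x | exp (-x ^ 2 / 2) < g x} ∩ Ioi a := fun x hx =>
      have hx' := max_lt_iff.1 hx
      ⟨exp_neg_sq_div_two_lt (ha.trans hx'.1) hx'.2.ne', hx'.1⟩
    rw [Measure.restrict_apply' measurableSet_Ioi]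
    exact fun h => by simpa [h] using measure_mono (μ := volume) hsub
  calc ∫ x in Ioi a, exp (-x ^ 2 / 2) < ∫ x in Ioi a, g x :=
        integral_lt_integral_of_ae_le_of_measure_setOf_lt_ne_zero hfi hgi hle hlt
    _ = 16 / (3 * exp 1 ^ 2 * a ^ 3) := by
      rw [integral_const_mul, integral_Ioi_rpow_of_lt (by norm_num) ha,
        show (-4 : ℝ) + 1 = -(3 : ℕ) by norm_num, rpow_neg ha.le, rpow_natCast, exp_neg]
      field_simp
      ring
end

section
/- For every $z \in [2/5, 4/3]$, $\int_{z-1/4}^{z+1/4}\int_0^\infty \exp(-\frac{x^2+y^2}{2})\sin(xy)\,dx\,dy > \frac{3}{20}$. -/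
/-
For `t, u ≥ 0`, consecutive partial sums of the Taylor series of `sin t` and `exp (-u)` bracket
them (integrate the previous bracket from `0`). Bounding `sin (x * y)` below by such a partial
sum and integrating termwise against the Gaussian odd moments
`∫₀^∞ x^(2k+1) exp (-x²/2) dx = 2^k k!` bounds the inner integral below, for `y ≥ 0`, by an
explicit polynomial `L = innerLowerBound 6 6` with an explicit primitive `P`. Since `L ≥ 0` on
`[0, 19/12]`, for `z ∈ [a, b]` the outer integral is at least `P (a + 1/4) - P (b - 1/4)`, and
nine subintervals `[a, b]` of `[2/5, 4/3]` make this exceed `3/20`.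
-/

open MeasureTheory Real Set
open scoped Nat

lemma nonneg_of_hasDerivAt_of_nonneg {f f' : ℝ → ℝ}
    (hf : ∀ x, 0 ≤ x → HasDerivAt f (f' x) x) (hf' : ∀ x, 0 ≤ x → 0 ≤ f' x)
    (h0 : f 0 = 0) {t : ℝ} (ht : 0 ≤ t) : 0 ≤ f t := by
  have hmono : MonotoneOn f (Ici 0) :=
    monotoneOn_of_hasDerivWithinAt_nonneg (convex_Ici 0)
      (fun x hx => (hf x hx).continuousAt.continuousWithinAt)
      (fun x hx => (hf x (interior_subset hx)).hasDerivWithinAt)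
      (fun x hx => hf' x (interior_subset hx))
  simpa [h0] using hmono self_mem_Ici ht ht

noncomputable def sinTaylor (n : ℕ) (t : ℝ) : ℝ :=
  ∑ k ∈ Finset.range n, (-1) ^ k * t ^ (2 * k + 1) / (2 * k + 1)!

noncomputable def cosTaylor (n : ℕ) (t : ℝ) : ℝ :=
  ∑ k ∈ Finset.range n, (-1) ^ k * t ^ (2 * k) / (2 * k)!

noncomputable def expNegTaylor (n : ℕ) (u : ℝ) : ℝ :=
  ∑ k ∈ Finset.range n, (-u) ^ k / k !

lemma hasDerivAt_sinTaylor (n : ℕ) (t : ℝ) : HasDerivAt (sinTaylor n) (cosTaylor n t) t := by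
  unfold sinTaylor cosTaylor
  refine HasDerivAt.fun_sum fun k _ => ?_
  refine (((hasDerivAt_pow (2 * k + 1) t).const_mul ((-1 : ℝ) ^ k)).div_const
    ((2 * k + 1)! : ℝ)).congr_deriv ?_
  rw [Nat.factorial_succ]
  push_cast
  field_simp

lemma hasDerivAt_cosTaylor (n : ℕ) (t : ℝ) :
    HasDerivAt (cosTaylor (n + 1)) (-sinTaylor n t) t := by
  have h : cosTaylor (n + 1) = fun t : ℝ =>
      ∑ k ∈ Finset.range n, (-1 : ℝ) ^ (k + 1) * t ^ (2 * k + 2) / (2 * k + 2)! + 1 := by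
    ext t; simp [cosTaylor, Finset.sum_range_succ', mul_add]
  rw [h, sinTaylor, ← Finset.sum_neg_distrib]
  refine (HasDerivAt.fun_sum fun k _ => ?_).add_const 1
  refine (((hasDerivAt_pow (2 * k + 2) t).const_mul ((-1 : ℝ) ^ (k + 1))).div_const
    ((2 * k + 2)! : ℝ)).congr_deriv ?_
  rw [show 2 * k + 2 = (2 * k + 1) + 1 by ring, Nat.factorial_succ]
  push_cast
  field_simp
  ring

lemma hasDerivAt_expNegTaylor (n : ℕ) (u : ℝ) :
    HasDerivAt (expNegTaylor (n + 1)) (-expNegTaylor n u) u := by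
  have h : expNegTaylor (n + 1) = fun u : ℝ =>
      ∑ k ∈ Finset.range n, (-u) ^ (k + 1) / (k + 1)! + 1 := by
    ext u; simp [expNegTaylor, Finset.sum_range_succ']
  rw [h, expNegTaylor, ← Finset.sum_neg_distrib]
  refine (HasDerivAt.fun_sum fun k _ => ?_).add_const 1
  refine (((hasDerivAt_neg u).pow (k + 1)).div_const ((k + 1)! : ℝ)).congr_deriv ?_
  rw [Nat.factorial_succ]
  push_cast
  field_simp

lemma sinTaylor_alternating_of_cosTaylor {n : ℕ}
    (h : ∀ t, 0 ≤ t → 0 ≤ (-1) ^ n * (cos t - cosTaylor n t)) {t : ℝ} (ht : 0 ≤ t) :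
    0 ≤ (-1) ^ n * (sin t - sinTaylor n t) :=
  nonneg_of_hasDerivAt_of_nonneg
    (fun x _ => ((hasDerivAt_sin x).sub (hasDerivAt_sinTaylor n x)).const_mul _) h
    (by simp [sinTaylor]) ht

lemma cosTaylor_alternating_of_sinTaylor {n : ℕ}
    (h : ∀ t, 0 ≤ t → 0 ≤ (-1) ^ n * (sin t - sinTaylor n t)) {t : ℝ} (ht : 0 ≤ t) :
    0 ≤ (-1) ^ (n + 1) * (cos t - cosTaylor (n + 1) t) := by
  refine nonneg_of_hasDerivAt_of_nonneg
    (fun x _ => ((hasDerivAt_cos x).sub (hasDerivAt_cosTaylor n x)).const_mul _)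
    (fun x hx => ?_) (by simp [cosTaylor, Finset.sum_range_succ']) ht
  convert h x hx using 1
  ring

lemma cosTaylor_alternating (n : ℕ) {t : ℝ} (ht : 0 ≤ t) :
    0 ≤ (-1) ^ (n + 1) * (cos t - cosTaylor (n + 1) t) := by
  induction n generalizing t with
  | zero => simpa [cosTaylor] using cos_le_one t
  | succ n ih =>
    exact cosTaylor_alternating_of_sinTaylor
      (fun _ hx => sinTaylor_alternating_of_cosTaylor (fun _ hy => ih hy) hx) ht

lemma sinTaylor_le_sin (m : ℕ) {t : ℝ} (ht : 0 ≤ t) : sinTaylor (2 * m + 2) t ≤ sin t := by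
  have h := sinTaylor_alternating_of_cosTaylor (n := 2 * m + 2)
    (fun _ hx => cosTaylor_alternating (2 * m + 1) hx) ht
  rw [Even.neg_one_pow ⟨m + 1, by ring⟩, one_mul] at h
  linarith

lemma expNegTaylor_alternating (n : ℕ) {u : ℝ} (hu : 0 ≤ u) :
    0 ≤ (-1) ^ n * (exp (-u) - expNegTaylor n u) := by
  induction n generalizing u with
  | zero => simpa [expNegTaylor] using (exp_pos _).le
  | succ n ih =>
    refine nonneg_of_hasDerivAt_of_nonneg
      (fun x _ => (((hasDerivAt_neg x).exp).sub (hasDerivAt_expNegTaylor n x)).const_mul _)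
      (fun x hx => ?_) (by simp [expNegTaylor, Finset.sum_range_succ']) hu
    convert ih hx using 1
    ring

lemma expNegTaylor_le_exp_neg (m : ℕ) {u : ℝ} (hu : 0 ≤ u) :
    expNegTaylor (2 * m) u ≤ exp (-u) := by
  simpa [pow_mul] using expNegTaylor_alternating (2 * m) hu

lemma integrableOn_pow_mul_exp_neg_sq_div_two (n : ℕ) :
    IntegrableOn (fun x : ℝ => x ^ n * exp (-x ^ 2 / 2)) (Ioi 0) := by
  refine (integrableOn_rpow_mul_exp_neg_mul_sq (b := 1 / 2) (by norm_num)
    (s := n) (by linarith [n.cast_nonneg (α := ℝ)])).congr_fun (fun x _ => ?_) measurableSet_Ioi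
  simp only [rpow_natCast]
  ring_nf

lemma integral_odd_pow_mul_exp_neg_sq_div_two (k : ℕ) :
    ∫ x in Ioi (0 : ℝ), x ^ (2 * k + 1) * exp (-x ^ 2 / 2) = 2 ^ k * k ! := by
  have h := integral_rpow_mul_exp_neg_mul_rpow (p := 2) (q := (2 * k + 1 : ℕ)) (b := 1 / 2)
    (by norm_num) (by linarith [(2 * k + 1 : ℕ).cast_nonneg (α := ℝ)]) (by norm_num)
  rw [show ((2 * k + 1 : ℕ) + 1 : ℝ) / 2 = k + 1 by push_cast; ring, Gamma_nat_eq_factorial,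
    show (-((2 * k + 1 : ℕ) + 1) / 2 : ℝ) = -((k + 1 : ℕ) : ℝ) by push_cast; ring,
    rpow_neg (by norm_num), rpow_natCast] at h
  have hcongr : ∀ x ∈ Ioi (0 : ℝ),
      x ^ (2 * k + 1) * exp (-x ^ 2 / 2) =
        x ^ ((2 * k + 1 : ℕ) : ℝ) * exp (-(1 / 2) * x ^ (2 : ℝ)) :=
    fun x _ => by rw [rpow_natCast, rpow_two]; ring_nf
  rw [setIntegral_congr_fun measurableSet_Ioi hcongr, h, one_div, inv_pow, inv_inv, pow_succ]
  field_simp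

noncomputable def gaussSinSeries (n : ℕ) (y : ℝ) : ℝ :=
  ∑ k ∈ Finset.range n, (-1) ^ k * 2 ^ k * k ! / (2 * k + 1)! * y ^ (2 * k + 1)

lemma exp_neg_sq_div_two_mul_sinTaylor (n : ℕ) (x y : ℝ) :
    exp (-x ^ 2 / 2) * sinTaylor n (x * y) =
      ∑ k ∈ Finset.range n,
        (-1) ^ k * y ^ (2 * k + 1) / (2 * k + 1)! * (x ^ (2 * k + 1) * exp (-x ^ 2 / 2)) := by
  rw [sinTaylor, Finset.mul_sum]
  exact Finset.sum_congr rfl fun k _ => by ring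

lemma integrableOn_exp_neg_sq_div_two_mul_sinTaylor (n : ℕ) (y : ℝ) :
    IntegrableOn (fun x : ℝ => exp (-x ^ 2 / 2) * sinTaylor n (x * y)) (Ioi 0) := by
  simp only [exp_neg_sq_div_two_mul_sinTaylor]
  exact integrable_finsetSum _ fun k _ =>
    (integrableOn_pow_mul_exp_neg_sq_div_two (2 * k + 1)).const_mul _

lemma integral_exp_neg_sq_div_two_mul_sinTaylor (n : ℕ) (y : ℝ) :
    ∫ x in Ioi (0 : ℝ), exp (-x ^ 2 / 2) * sinTaylor n (x * y) = gaussSinSeries n y := by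
  simp only [exp_neg_sq_div_two_mul_sinTaylor]
  rw [integral_finsetSum _ fun k _ =>
    (integrableOn_pow_mul_exp_neg_sq_div_two (2 * k + 1)).const_mul _]
  refine Finset.sum_congr rfl fun k _ => ?_
  rw [integral_const_mul, integral_odd_pow_mul_exp_neg_sq_div_two]
  ring

lemma integrableOn_exp_neg_sq_div_two_mul_sin (y : ℝ) :
    IntegrableOn (fun x : ℝ => exp (-x ^ 2 / 2) * sin (x * y)) (Ioi 0) := by
  refine (integrableOn_pow_mul_exp_neg_sq_div_two 0).mono' (by fun_prop) ?_
  filter_upwards with x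
  rw [norm_mul, norm_of_nonneg (exp_pos _).le, pow_zero, one_mul]
  exact mul_le_of_le_one_right (exp_pos _).le (abs_sin_le_one _)

lemma gaussSinSeries_le_integral (m : ℕ) {y : ℝ} (hy : 0 ≤ y) :
    gaussSinSeries (2 * m + 2) y ≤ ∫ x in Ioi (0 : ℝ), exp (-x ^ 2 / 2) * sin (x * y) := by
  rw [← integral_exp_neg_sq_div_two_mul_sinTaylor]
  exact setIntegral_mono_on (integrableOn_exp_neg_sq_div_two_mul_sinTaylor _ y)
    (integrableOn_exp_neg_sq_div_two_mul_sin y) measurableSet_Ioi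
    fun x hx => mul_le_mul_of_nonneg_left (sinTaylor_le_sin m (mul_nonneg (le_of_lt hx) hy))
      (exp_pos _).le

lemma expNegTaylor_six_nonneg {u : ℝ} (h0 : 0 ≤ u) (h1 : u ≤ 2) : 0 ≤ expNegTaylor 6 u := by
  simp only [expNegTaylor, Finset.sum_range_succ, Finset.sum_range_zero, Nat.factorial]
  norm_num
  nlinarith [mul_nonneg (mul_nonneg h0 h0) (sq_nonneg (u - 2)),
    mul_nonneg (pow_nonneg h0 4) (sub_nonneg.2 h1)]

lemma gaussSinSeries_six_nonneg {y : ℝ} (h0 : 0 ≤ y) (h1 : y ^ 2 ≤ 3) :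
    0 ≤ gaussSinSeries 6 y := by
  have hQ : ∀ s : ℝ, 0 ≤ s → s ≤ 3 →
      0 ≤ 10395 - 3465 * s + 693 * s ^ 2 - 99 * s ^ 3 + 11 * s ^ 4 - s ^ 5 := fun s hs0 hs3 => by
    nlinarith [mul_nonneg (mul_nonneg hs0 hs0) (sq_nonneg (s - 3)),
      mul_nonneg (pow_nonneg hs0 4) (sub_nonneg.2 hs3)]
  have hG : gaussSinSeries 6 y = y * (10395 - 3465 * y ^ 2 + 693 * (y ^ 2) ^ 2 - 99 * (y ^ 2) ^ 3
      + 11 * (y ^ 2) ^ 4 - (y ^ 2) ^ 5) / 10395 := by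
    simp only [gaussSinSeries, Finset.sum_range_succ, Finset.sum_range_zero, Nat.factorial]
    norm_num
    ring
  rw [hG]
  exact div_nonneg (mul_nonneg h0 (hQ _ (sq_nonneg y) h1)) (by norm_num)

noncomputable def innerLowerBound (n m : ℕ) (y : ℝ) : ℝ :=
  expNegTaylor n (y ^ 2 / 2) * gaussSinSeries m y

noncomputable def innerLowerBoundPrimitive (n m : ℕ) (y : ℝ) : ℝ :=
  ∑ i ∈ Finset.range n, ∑ j ∈ Finset.range m,
    (-1 / 2) ^ i / i ! * ((-1) ^ j * 2 ^ j * j ! / (2 * j + 1)!) * y ^ (2 * i + 2 * j + 2) /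
      (2 * i + 2 * j + 2)

lemma hasDerivAt_innerLowerBoundPrimitive (n m : ℕ) (y : ℝ) :
    HasDerivAt (innerLowerBoundPrimitive n m) (innerLowerBound n m y) y := by
  have h : innerLowerBound n m y = ∑ i ∈ Finset.range n, ∑ j ∈ Finset.range m,
      (-1 / 2) ^ i / i ! * ((-1) ^ j * 2 ^ j * j ! / (2 * j + 1)!) * y ^ (2 * i + 2 * j + 1) := by
    rw [innerLowerBound, expNegTaylor, gaussSinSeries, Finset.sum_mul_sum]
    refine Finset.sum_congr rfl fun i _ => Finset.sum_congr rfl fun j _ => ?_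
    ring
  rw [h]
  unfold innerLowerBoundPrimitive
  refine HasDerivAt.fun_sum fun i _ => HasDerivAt.fun_sum fun j _ => ?_
  refine (((hasDerivAt_pow (2 * i + 2 * j + 2) y).const_mul _).div_const _).congr_deriv ?_
  push_cast
  field_simp

lemma exp_neg_sq_add_sq_div_two (x y : ℝ) :
    exp (-(x ^ 2 + y ^ 2) / 2) = exp (-y ^ 2 / 2) * exp (-x ^ 2 / 2) := by
  rw [← exp_add]
  ring_nf

lemma norm_exp_neg_sq_add_sq_div_two_mul_sin_le (x y : ℝ) :
    ‖exp (-(x ^ 2 + y ^ 2) / 2) * sin (x * y)‖ ≤ exp (-x ^ 2 / 2) := by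
  rw [norm_mul, norm_of_nonneg (exp_pos _).le, exp_neg_sq_add_sq_div_two]
  calc exp (-y ^ 2 / 2) * exp (-x ^ 2 / 2) * ‖sin (x * y)‖ ≤ 1 * exp (-x ^ 2 / 2) * 1 := by
        gcongr
        · exact exp_le_one_iff.2 (by nlinarith [sq_nonneg y])
        · exact abs_sin_le_one _
    _ = exp (-x ^ 2 / 2) := by ring

lemma continuous_integral_exp_neg_sq_add_sq_div_two_mul_sin :
    Continuous fun y : ℝ => ∫ x in Ioi (0 : ℝ), exp (-(x ^ 2 + y ^ 2) / 2) * sin (x * y) := by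
  refine continuous_of_dominated (fun y => by fun_prop)
    (fun y => ae_of_all _ fun x => norm_exp_neg_sq_add_sq_div_two_mul_sin_le x y) ?_
    (ae_of_all _ fun x => by fun_prop)
  simpa [IntegrableOn] using integrableOn_pow_mul_exp_neg_sq_div_two 0

lemma innerLowerBound_le_integral (n m : ℕ) {y : ℝ} (hy : 0 ≤ y)
    (hG : 0 ≤ gaussSinSeries (2 * m + 2) y) :
    innerLowerBound (2 * n) (2 * m + 2) y ≤
      ∫ x in Ioi (0 : ℝ), exp (-(x ^ 2 + y ^ 2) / 2) * sin (x * y) := by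
  simp only [exp_neg_sq_add_sq_div_two, mul_assoc, integral_const_mul]
  calc innerLowerBound (2 * n) (2 * m + 2) y
        ≤ exp (-y ^ 2 / 2) * gaussSinSeries (2 * m + 2) y := by
        refine mul_le_mul_of_nonneg_right ?_ hG
        simpa [neg_div] using expNegTaylor_le_exp_neg n (by positivity : 0 ≤ y ^ 2 / 2)
    _ ≤ _ := mul_le_mul_of_nonneg_left (gaussSinSeries_le_integral m hy) (exp_pos _).le

lemma innerLowerBoundPrimitive_sub_le_integral {a b c d : ℝ} (ha : 0 ≤ a) (hb : b ≤ 19 / 12)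
    (hac : a ≤ c) (hcd : c ≤ d) (hdb : d ≤ b) :
    innerLowerBoundPrimitive 6 6 d - innerLowerBoundPrimitive 6 6 c ≤
      ∫ y in Icc a b, ∫ x in Ioi (0 : ℝ), exp (-(x ^ 2 + y ^ 2) / 2) * sin (x * y) := by
  have hL : ∀ y ∈ Icc a b, 0 ≤ innerLowerBound 6 6 y ∧ innerLowerBound 6 6 y ≤
      ∫ x in Ioi (0 : ℝ), exp (-(x ^ 2 + y ^ 2) / 2) * sin (x * y) := by
    rintro y ⟨hay, hyb⟩
    have hy0 : 0 ≤ y := ha.trans hay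
    have hy2 : y ^ 2 ≤ 3 := by nlinarith
    have hG := gaussSinSeries_six_nonneg hy0 hy2
    exact ⟨mul_nonneg (expNegTaylor_six_nonneg (by positivity) (by linarith)) hG,
      innerLowerBound_le_integral 3 2 hy0 hG⟩
  have hcont : Continuous (innerLowerBound 6 6) := by
    unfold innerLowerBound expNegTaylor gaussSinSeries
    fun_prop
  calc innerLowerBoundPrimitive 6 6 d - innerLowerBoundPrimitive 6 6 c
        = ∫ y in Icc c d, innerLowerBound 6 6 y := by
          rw [integral_Icc_eq_integral_Ioc, ← intervalIntegral.integral_of_le hcd,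
            intervalIntegral.integral_eq_sub_of_hasDerivAt
              (fun y _ => hasDerivAt_innerLowerBoundPrimitive 6 6 y)
              (hcont.intervalIntegrable c d)]
    _ ≤ ∫ y in Icc a b, innerLowerBound 6 6 y :=
          setIntegral_mono_set hcont.integrableOn_Icc
            ((ae_restrict_iff' measurableSet_Icc).2 (ae_of_all _ fun y hy => (hL y hy).1))
            (Icc_subset_Icc hac hdb).eventuallyLE
    _ ≤ _ := setIntegral_mono_on hcont.integrableOn_Icc
          continuous_integral_exp_neg_sq_add_sq_div_two_mul_sin.integrableOn_Icc measurableSet_Icc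
          fun y hy => (hL y hy).2

lemma lt_integral_of_mem_Icc {a b z : ℝ} (hz : z ∈ Icc a b) (ha : 1 / 4 ≤ a)
    (hb : b ≤ 4 / 3) (hab : b ≤ a + 1 / 2)
    (h : 3 / 20 <
      innerLowerBoundPrimitive 6 6 (a + 1 / 4) - innerLowerBoundPrimitive 6 6 (b - 1 / 4)) :
    3 / 20 < ∫ y in Icc (z - 1 / 4) (z + 1 / 4),
      ∫ x in Ioi (0 : ℝ), exp (-(x ^ 2 + y ^ 2) / 2) * sin (x * y) :=
  h.trans_le (innerLowerBoundPrimitive_sub_le_integral (by linarith [hz.1]) (by linarith [hz.2])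
    (by linarith [hz.2]) (by linarith) (by linarith [hz.1]))

theorem stmt_14 (z : ℝ) (hz : z ∈ Set.Icc (2 / 5 : ℝ) (4 / 3)) :
    (3 / 20 : ℝ) <
      ∫ y in Set.Icc (z - 1 / 4) (z + 1 / 4),
        ∫ x in Set.Ioi (0 : ℝ),
          Real.exp (-(x ^ 2 + y ^ 2) / 2) * Real.sin (x * y) := by
  have hcover : z ∈ Icc (2 / 5) (489 / 1000) ∨ z ∈ Icc (489 / 1000) (317 / 500) ∨
      z ∈ Icc (317 / 500) (809 / 1000) ∨ z ∈ Icc (809 / 1000) (49 / 50) ∨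
      z ∈ Icc (49 / 50) (561 / 500) ∨ z ∈ Icc (561 / 500) (153 / 125) ∨
      z ∈ Icc (153 / 125) (161 / 125) ∨ z ∈ Icc (161 / 125) (331 / 250) ∨
      z ∈ Icc (331 / 250) (4 / 3) := by
    simp only [mem_Icc] at hz ⊢
    grind
  rcases hcover with hz | hz | hz | hz | hz | hz | hz | hz | hz <;>
    refine lt_integral_of_mem_Icc hz ?_ ?_ ?_ ?_ <;>
    norm_num [innerLowerBoundPrimitive, Finset.sum_range_succ, Nat.factorial]
end
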